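/- arXiv:2401.11486 — 2 statements merged into one kernel-verified Lean document; each statement's English description precedes it below -/
import Mathlib

section
/- Let n be even. Then for any m ∈ ℕ, L_m ⊆ Δ(L_{m+2} ⊕ ℝ[x]); that is, for any f ∈ L_m there exists g ∈ L_{m+2} ⊕ ℝ[x] such that Δg = f on ℝⁿ \ {0}. -/
/-!
For `p` homogeneous of degree `k`, `Δ (p log r) = (Δp) log r + (2k + n - 2) p / r²`. Given a
homogeneous `P` of degree `m`, take `p = r² U` with `Δ (r² U) = P`: the second term is then the
polynomial `(2m + n + 2) U`, cancelled by adding `r² S` with `Δ (r² S) = -(2m + n + 2) U`.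
The operator `U ↦ Δ (r² U) = (2n + 4d) U + r² ΔU` on homogeneous polynomials of degree `d` is
inverted by induction on `d`, since `ΔU` has degree `d - 2`.
-/

open MeasureTheory Finset Matrix

noncomputable section

/-- The Euclidean norm `r = |x|` on `Fin n → ℝ`. -/
def rnorm {n : ℕ} (x : Fin n → ℝ) : ℝ := Real.sqrt (∑ i, x i ^ 2)

/-- The partial derivative `∂ᵢ f` at `x`. -/
def partialD {n : ℕ} (i : Fin n) (f : (Fin n → ℝ) → ℝ) (x : Fin n → ℝ) : ℝ :=
  fderiv ℝ f x (Pi.single i 1)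

/-- The Laplacian `Δ f = ∑ ∂ᵢ∂ᵢ f`. -/
def laplacian {n : ℕ} (f : (Fin n → ℝ) → ℝ) (x : Fin n → ℝ) : ℝ :=
  ∑ i, partialD i (fun y => partialD i f y) x

/-- The constant-coefficient divergence-form operator `-div(K₀ ∇u) = -∑ (K₀)ᵢⱼ ∂ᵢ∂ⱼ u`. -/
def divFormConst {n : ℕ} (K0 : Matrix (Fin n) (Fin n) ℝ) (u : (Fin n → ℝ) → ℝ)
    (x : Fin n → ℝ) : ℝ :=
  -∑ i, ∑ j, K0 i j * partialD i (fun y => partialD j u y) x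

/-- The divergence-form operator `-div(K(x) ∇u) = -∑ ∂ᵢ(Kᵢⱼ(x) ∂ⱼ u)`. -/
def divForm {n : ℕ} (Kf : (Fin n → ℝ) → Matrix (Fin n) (Fin n) ℝ) (u : (Fin n → ℝ) → ℝ)
    (x : Fin n → ℝ) : ℝ :=
  -∑ i, ∑ j, partialD i (fun y => Kf y i j * partialD j u y) x

/-- The space `E^{n+2m}_{k+2m}`: span of `x^α / r^(n+2m)` over `|α| = k + 2m`. -/
def Esp (n m k : ℕ) : Submodule ℝ ((Fin n → ℝ) → ℝ) :=
  Submodule.span ℝ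
    {f | ∃ α : Fin n → ℕ, (∑ i, α i) = k + 2 * m ∧
      f = fun x => (∏ i, x i ^ α i) / rnorm x ^ (n + 2 * m)}

/-- `f` is a (real multivariate) polynomial function. -/
def IsPolyFun {n : ℕ} (f : (Fin n → ℝ) → ℝ) : Prop :=
  ∃ p : MvPolynomial (Fin n) ℝ, f = fun x => MvPolynomial.eval x p

/-- The space `ℝ[x]` of polynomial functions. -/
def PolySp (n : ℕ) : Submodule ℝ ((Fin n → ℝ) → ℝ) :=
  Submodule.span ℝ {f | IsPolyFun f}

/-- The singular part `E^{n+2m,s}_{k+2m}`: span of the non-polynomial basis elements. -/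
def EspS (n m k : ℕ) : Submodule ℝ ((Fin n → ℝ) → ℝ) :=
  Submodule.span ℝ
    {f | ∃ α : Fin n → ℕ, (∑ i, α i) = k + 2 * m ∧
      f = (fun x => (∏ i, x i ^ α i) / rnorm x ^ (n + 2 * m)) ∧
      ¬ IsPolyFun (fun x => (∏ i, x i ^ α i) / rnorm x ^ (n + 2 * m))}

/-- The space `L_m`: span of `x^α log r` over `|α| = m`. -/
def Lsp (n m : ℕ) : Submodule ℝ ((Fin n → ℝ) → ℝ) :=
  Submodule.span ℝ
    {f | ∃ α : Fin n → ℕ, (∑ i, α i) = m ∧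
      f = fun x => (∏ i, x i ^ α i) * Real.log (rnorm x)}

/-- The space `F^{n+2m}_{k+2m}`. -/
def Fsp (n m k : ℕ) : Submodule ℝ ((Fin n → ℝ) → ℝ) :=
  if k < n then Esp n m k else EspS n m k ⊔ Lsp n (k - n)

/-- The space `Ẽ^{n+2m}_{k+2m}`. -/
def Etil (n m k : ℕ) : Submodule ℝ ((Fin n → ℝ) → ℝ) :=
  if k < n then Fsp n m k else Fsp n m k ⊔ PolySp n

/-- Composition `f ∘ T` with a matrix `T`. -/
def compT {n : ℕ} (T : Matrix (Fin n) (Fin n) ℝ) (f : (Fin n → ℝ) → ℝ) :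
    (Fin n → ℝ) → ℝ :=
  fun x => f (T.mulVec x)

/-- A bounded smooth domain in `ℝⁿ`. -/
def IsSmoothDomain {n : ℕ} (Ω : Set (Fin n → ℝ)) : Prop :=
  IsOpen Ω ∧ Bornology.IsBounded Ω ∧ Ω.Nonempty ∧
  ∃ φ : (Fin n → ℝ) → ℝ, ContDiff ℝ (⊤ : ℕ∞) φ ∧ Ω = {x | φ x < 0} ∧
    ∀ x ∈ frontier Ω, φ x = 0 ∧ fderiv ℝ φ x ≠ 0

/-- `f ∈ C^{l,γ}(s)`: derivatives up to order `l` continuous on `s`, the `l`-th derivative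
`γ`-Hölder continuous on `s`. -/
def CHolder {n : ℕ} (l : ℕ) (γ : ℝ) (s : Set (Fin n → ℝ)) (f : (Fin n → ℝ) → ℝ) : Prop :=
  ContDiffOn ℝ l f s ∧
  ∃ C : ℝ, ∀ x ∈ s, ∀ y ∈ s,
    ‖iteratedFDerivWithin ℝ l f s x - iteratedFDerivWithin ℝ l f s y‖ ≤ C * dist x y ^ γ

/-- The `C^{l,γ}(s)` norm of `f` is at most `C`. -/
def HolderNormLE {n : ℕ} (l : ℕ) (γ : ℝ) (s : Set (Fin n → ℝ)) (f : (Fin n → ℝ) → ℝ)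
    (C : ℝ) : Prop :=
  (∀ j ≤ l, ∀ x ∈ s, ‖iteratedFDerivWithin ℝ j f s x‖ ≤ C) ∧
  ∀ x ∈ s, ∀ y ∈ s,
    ‖iteratedFDerivWithin ℝ l f s x - iteratedFDerivWithin ℝ l f s y‖ ≤ C * dist x y ^ γ

/-- `G` is the Green's function of `-div(K(x)∇·)` on `Ω` with zero Dirichlet boundary
condition, in the integral-form characterization. -/
def IsGreen {n : ℕ} (Ω : Set (Fin n → ℝ)) (Kf : (Fin n → ℝ) → Matrix (Fin n) (Fin n) ℝ)
    (G : (Fin n → ℝ) → (Fin n → ℝ) → ℝ) : Prop :=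
  (∀ y ∈ Ω, ∀ x ∈ frontier Ω, G x y = 0) ∧
  ∀ u : (Fin n → ℝ) → ℝ, ContDiffOn ℝ 2 u Ω → ContDiffOn ℝ 1 u (closure Ω) →
    (∀ x ∈ frontier Ω, u x = 0) →
    ∀ y ∈ Ω, u y = ∫ x in Ω, G x y * divForm Kf u x

/-- The fundamental solution `Φ₀` of `-Δ` in `ℝⁿ`. -/
def Phi0 (n : ℕ) (x : Fin n → ℝ) : ℝ :=
  if n = 2 then -(1 / (2 * Real.pi)) * Real.log (rnorm x)
  else rnorm x ^ ((2 : ℝ) - (n : ℝ)) /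
    ((n : ℝ) * ((n : ℝ) - 2) * (volume (Metric.ball (0 : EuclideanSpace ℝ (Fin n)) 1)).toReal)

namespace MvPolynomial

section Laplacian

variable {σ R : Type*} [Fintype σ] [CommSemiring R]

variable (σ R) in
def sumSqX : MvPolynomial σ R := ∑ i, X i ^ 2

def polyLaplacian : MvPolynomial σ R →ₗ[R] MvPolynomial σ R :=
  ∑ i, (pderiv i).toLinearMap ∘ₗ (pderiv i).toLinearMap

lemma polyLaplacian_apply (p : MvPolynomial σ R) :
    polyLaplacian p = ∑ i, pderiv i (pderiv i p) := by
  simp [polyLaplacian]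

lemma IsHomogeneous.polyLaplacian {p : MvPolynomial σ R} {d : ℕ} (hp : p.IsHomogeneous d) :
    (polyLaplacian p).IsHomogeneous (d - 2) := by
  rw [polyLaplacian_apply]
  exact IsHomogeneous.sum _ _ _ fun i _ => by
    simpa [Nat.sub_sub] using (hp.pderiv (i := i)).pderiv (i := i)

lemma polyLaplacian_eq_zero_of_lt_two {p : MvPolynomial σ R} {d : ℕ} (hp : p.IsHomogeneous d)
    (hd : d < 2) : polyLaplacian p = 0 := by
  rw [polyLaplacian_apply]
  refine Finset.sum_eq_zero fun i _ => ?_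
  have h0 : (pderiv i p).IsHomogeneous 0 := by
    simpa [Nat.sub_eq_zero_of_le (Nat.le_of_lt_succ hd)] using hp.pderiv (i := i)
  rw [← totalDegree_zero_iff_isHomogeneous, totalDegree_eq_zero_iff_eq_C] at h0
  rw [h0, pderiv_C]

lemma isHomogeneous_sumSqX : (sumSqX σ R).IsHomogeneous 2 :=
  IsHomogeneous.sum _ _ _ fun i _ => isHomogeneous_X_pow i 2

lemma pderiv_sumSqX (i : σ) : pderiv i (sumSqX σ R) = 2 * X i := by
  classical
  simp [sumSqX, pderiv_X, Pi.single_apply]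

lemma polyLaplacian_sumSqX_mul {U : MvPolynomial σ R} {d : ℕ} (hU : U.IsHomogeneous d) :
    polyLaplacian (sumSqX σ R * U)
      = (2 * Fintype.card σ + 4 * d) • U + sumSqX σ R * polyLaplacian U := by
  have h : ∀ i, pderiv i (pderiv i (sumSqX σ R * U))
      = 2 * U + 4 * (X i * pderiv i U) + sumSqX σ R * pderiv i (pderiv i U) := by
    intro i
    have h2 : pderiv i (2 : MvPolynomial σ R) = 0 := by simpa using (pderiv i).map_natCast 2
    simp only [Derivation.leibniz, smul_eq_mul, pderiv_sumSqX, map_add, pderiv_X_self, h2]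
    ring
  simp only [polyLaplacian_apply, h, Finset.sum_add_distrib, Finset.sum_const, Finset.card_univ,
    ← Finset.mul_sum, hU.sum_X_mul_pderiv, nsmul_eq_mul]
  push_cast
  ring

end Laplacian

section Solve

variable {σ K : Type*} [Fintype σ] [Field K] [CharZero K]

lemma exists_smul_add_sumSqX_mul_polyLaplacian_eq {e : ℕ} (he : 0 < e) {d : ℕ}
    {p : MvPolynomial σ K} (hp : p.IsHomogeneous d) :
    ∃ S : MvPolynomial σ K, S.IsHomogeneous d ∧ e • S + sumSqX σ K * polyLaplacian S = p := by
  induction d using Nat.strong_induction_on generalizing e p with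
  | _ d ih =>
  have hCe : (e : MvPolynomial σ K) * C (e : K)⁻¹ = 1 := by
    rw [← map_natCast (C : K →+* MvPolynomial σ K), ← C_mul,
      mul_inv_cancel₀ (by exact_mod_cast he.ne'), C_1]
  rcases lt_or_ge d 2 with hd | hd
  · refine ⟨C (e : K)⁻¹ * p, hp.C_mul _, ?_⟩
    rw [← smul_eq_C_mul, map_smul, polyLaplacian_eq_zero_of_lt_two hp hd, smul_zero, mul_zero,
      add_zero, smul_eq_C_mul, nsmul_eq_mul, ← mul_assoc, hCe, one_mul]
  · -- `S = e⁻¹ p + r² U` reduces the equation to the same one for `U`, in degree `d - 2`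
    obtain ⟨U, hU, hUeq⟩ := ih (d - 2) (by omega) (e := e + 2 * Fintype.card σ + 4 * (d - 2))
      (by omega) (hp.polyLaplacian.C_mul (-(e : K)⁻¹))
    refine ⟨C (e : K)⁻¹ * p + sumSqX σ K * U, (hp.C_mul _).add ?_, ?_⟩
    · simpa [show 2 + (d - 2) = d by omega] using isHomogeneous_sumSqX.mul hU
    rw [map_add, ← smul_eq_C_mul, map_smul, polyLaplacian_sumSqX_mul hU]
    simp only [smul_eq_C_mul, nsmul_eq_mul, C_neg] at hUeq ⊢
    push_cast at hUeq ⊢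
    linear_combination sumSqX σ K * hUeq + p * hCe

lemma exists_polyLaplacian_sumSqX_mul_eq [Nonempty σ] {d : ℕ} {p : MvPolynomial σ K}
    (hp : p.IsHomogeneous d) :
    ∃ U : MvPolynomial σ K, U.IsHomogeneous d ∧ polyLaplacian (sumSqX σ K * U) = p := by
  obtain ⟨U, hU, hUeq⟩ := exists_smul_add_sumSqX_mul_polyLaplacian_eq
    (e := 2 * Fintype.card σ + 4 * d) (by have := Fintype.card_pos (α := σ); omega) hp
  exact ⟨U, hU, by rw [polyLaplacian_sumSqX_mul hU, hUeq]⟩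

end Solve

end MvPolynomial

section Lsp

open MvPolynomial

variable {n : ℕ}

def logMul : MvPolynomial (Fin n) ℝ →ₗ[ℝ] (Fin n → ℝ) → ℝ where
  toFun p x := eval x p * Real.log (rnorm x)
  map_add' p q := by funext x; simp [add_mul]
  map_smul' a p := by funext x; simp [mul_assoc]

lemma Lsp_eq_map_homogeneousSubmodule (m : ℕ) :
    Lsp n m = (homogeneousSubmodule (Fin n) ℝ m).map logMul := by
  rw [homogeneousSubmodule_eq_finsupp_supported, AddMonoidAlgebra.supported_eq_span_single,
    Submodule.map_span, Set.image_image, Lsp]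
  congr 1
  ext f
  constructor
  · rintro ⟨α, hα, rfl⟩
    refine ⟨Finsupp.equivFunOnFinite.symm α, by simp [Finsupp.degree_eq_sum, hα], ?_⟩
    funext x
    simp [logMul, single_eq_monomial, eval_monomial, Finsupp.prod_pow]
  · rintro ⟨d, hd, rfl⟩
    refine ⟨d, by simpa [Finsupp.degree_eq_sum] using hd, ?_⟩
    funext x
    simp [logMul, single_eq_monomial, eval_monomial, Finsupp.prod_pow]

end Lsp

section LogPolynomial

open MvPolynomial

variable {n : ℕ}

def logPolyFun (p q s : MvPolynomial (Fin n) ℝ) (x : Fin n → ℝ) : ℝ :=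
  eval x p * Real.log (rnorm x) + eval x q / rnorm x ^ 2 + eval x s

lemma rnorm_sq (x : Fin n → ℝ) : rnorm x ^ 2 = eval x (sumSqX (Fin n) ℝ) := by
  rw [rnorm, Real.sq_sqrt (by positivity)]
  simp [sumSqX]

lemma rnorm_ne_zero {x : Fin n → ℝ} (hx : x ≠ 0) : rnorm x ≠ 0 := by
  have : rnorm x = ‖(WithLp.toLp 2 x : EuclideanSpace ℝ (Fin n))‖ := by
    simp [rnorm, EuclideanSpace.norm_eq]
  simpa [this] using hx

lemma hasFDerivAt_eval (p : MvPolynomial (Fin n) ℝ) (x : Fin n → ℝ) :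
    HasFDerivAt (fun y => eval y p)
      (∑ i, eval x (pderiv i p) • (ContinuousLinearMap.proj i : (Fin n → ℝ) →L[ℝ] ℝ)) x := by
  induction p using MvPolynomial.induction_on with
  | C a => simpa using hasFDerivAt_const a x
  | add p q hp hq => simpa [add_smul, Finset.sum_add_distrib] using hp.fun_add hq
  | mul_X p j hp =>
    have hfun : (fun y : Fin n → ℝ => eval y (p * X j)) = fun y => eval y p * y j := by
      funext y; simp
    rw [hfun]
    refine (hp.fun_mul (hasFDerivAt_apply j x)).congr_fderiv ?_
    ext v
    simp [Finset.sum_add_distrib, Finset.mul_sum, pderiv_X, Pi.single_apply, add_mul,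
      apply_ite, ite_mul, mul_assoc]

lemma partialD_logPolyFun (p q s : MvPolynomial (Fin n) ℝ) {x : Fin n → ℝ} (hx : x ≠ 0)
    (i : Fin n) :
    partialD i (logPolyFun p q s) x
      = eval x (pderiv i p) * Real.log (rnorm x)
        + (x i * eval x p + eval x (pderiv i q)) / rnorm x ^ 2
        - 2 * x i * eval x q / rnorm x ^ 4 + eval x (pderiv i s) := by
  set S := sumSqX (Fin n) ℝ
  have hS : eval x S ≠ 0 := by rw [← rnorm_sq]; exact pow_ne_zero 2 (rnorm_ne_zero hx)
  -- writing `log r = log (r ^ 2) / 2` avoids differentiating the square root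
  have hfun : logPolyFun p q s
      = fun y =>
        eval y p * (Real.log (eval y S) * 2⁻¹) + eval y q * (eval y S)⁻¹ + eval y s := by
    funext y
    rw [logPolyFun, ← rnorm_sq, Real.log_pow]
    push_cast
    ring
  have hlog := ((hasFDerivAt_eval S x).log hS).mul_const 2⁻¹
  have hinv := (hasDerivAt_inv hS).comp_hasFDerivAt x (hasFDerivAt_eval S x)
  have hD := (((hasFDerivAt_eval p x).fun_mul hlog).fun_add
    ((hasFDerivAt_eval q x).fun_mul hinv)).fun_add (hasFDerivAt_eval s x)
  simp only [Function.comp_def] at hD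
  rw [partialD, hfun, hD.fderiv]
  simp only [S, ← rnorm_sq, pderiv_sumSqX, map_mul, eval_ofNat, eval_X, Real.log_pow,
    Nat.cast_ofNat, neg_smul, smul_neg, _root_.add_apply,
    _root_.smul_apply, _root_.sum_apply, _root_.neg_apply,
    ContinuousLinearMap.proj_apply, Pi.single_apply, smul_eq_mul, mul_ite, mul_one, mul_zero,
    Finset.sum_ite_eq', Finset.mem_univ, if_true]
  have := rnorm_ne_zero hx
  field_simp
  ring

lemma partialD_logPolyFun_zero (p s : MvPolynomial (Fin n) ℝ) {x : Fin n → ℝ} (hx : x ≠ 0)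
    (i : Fin n) :
    partialD i (logPolyFun p 0 s) x = logPolyFun (pderiv i p) (p * X i) (pderiv i s) x := by
  rw [partialD_logPolyFun p 0 s hx, logPolyFun]
  simp [mul_comm]

lemma laplacian_logPolyFun {p : MvPolynomial (Fin n) ℝ} {k : ℕ} (hp : p.IsHomogeneous k)
    (s : MvPolynomial (Fin n) ℝ) {x : Fin n → ℝ} (hx : x ≠ 0) :
    laplacian (logPolyFun p 0 s) x
      = eval x (polyLaplacian p) * Real.log (rnorm x)
        + (2 * k + n - 2) * eval x p / rnorm x ^ 2 + eval x (polyLaplacian s) := by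
  have hsecond : ∀ i, partialD i (fun y => partialD i (logPolyFun p 0 s) y) x
      = partialD i (logPolyFun (pderiv i p) (p * X i) (pderiv i s)) x := fun i => by
    rw [partialD, partialD, Filter.EventuallyEq.fderiv_eq]
    filter_upwards [isOpen_compl_singleton.mem_nhds hx] with y hy
    exact partialD_logPolyFun_zero p s hy i
  have heuler : ∑ i, x i * eval x (pderiv i p) = k * eval x p := by
    simpa using congrArg (eval x) hp.sum_X_mul_pderiv
  have hsq : ∑ i, x i ^ 2 = rnorm x ^ 2 := by simp [rnorm_sq, sumSqX]
  have hterm : ∀ i, partialD i (logPolyFun (pderiv i p) (p * X i) (pderiv i s)) x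
      = eval x (pderiv i (pderiv i p)) * Real.log (rnorm x) + eval x (pderiv i (pderiv i s))
        + x i * eval x (pderiv i p) * (2 / rnorm x ^ 2) + eval x p / rnorm x ^ 2
        - x i ^ 2 * (2 * eval x p / rnorm x ^ 4) := fun i => by
    rw [partialD_logPolyFun _ _ _ hx]
    simp only [pderiv_mul, pderiv_X_self, map_add, map_mul, eval_X, map_one]
    ring
  simp only [laplacian, hsecond, hterm, Finset.sum_add_distrib, Finset.sum_sub_distrib,
    ← Finset.sum_mul, heuler, hsq, polyLaplacian_apply, map_sum, Finset.sum_const,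
    Finset.card_univ, Fintype.card_fin, nsmul_eq_mul]
  have := rnorm_ne_zero hx
  field_simp
  ring

lemma exists_laplacian_logPolyFun_eq_logMul {m : ℕ} (hn : 0 < n) {p : MvPolynomial (Fin n) ℝ}
    (hp : p.IsHomogeneous m) :
    ∃ Q q : MvPolynomial (Fin n) ℝ, Q.IsHomogeneous (m + 2) ∧
      ∀ x, x ≠ 0 → laplacian (logPolyFun Q 0 q) x = logMul p x := by
  have : Nonempty (Fin n) := ⟨⟨0, hn⟩⟩
  obtain ⟨U, hU, hΔU⟩ := exists_polyLaplacian_sumSqX_mul_eq hp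
  obtain ⟨S, -, hΔS⟩ := exists_polyLaplacian_sumSqX_mul_eq (hU.C_mul (-(2 * m + n + 2 : ℝ)))
  have hQ : (sumSqX (Fin n) ℝ * U).IsHomogeneous (m + 2) := by
    simpa [add_comm] using isHomogeneous_sumSqX.mul hU
  refine ⟨_, sumSqX (Fin n) ℝ * S, hQ, fun x hx => ?_⟩
  rw [laplacian_logPolyFun hQ _ hx, hΔU, hΔS]
  have := rnorm_ne_zero hx
  simp only [logMul, LinearMap.coe_mk, AddHom.coe_mk, eval_mul, eval_C, ← rnorm_sq]
  field_simp
  push_cast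
  ring

end LogPolynomial

theorem Lsp_subset_laplacian_general
    (n : ℕ) (hn : 2 ≤ n) (m : ℕ)
    (f : (Fin n → ℝ) → ℝ) (hf : f ∈ Lsp n m) :
    ∃ g ∈ Lsp n (m + 2) ⊔ PolySp n, ∀ x : Fin n → ℝ, x ≠ 0 → laplacian g x = f x := by
  rw [Lsp_eq_map_homogeneousSubmodule] at hf
  obtain ⟨p, hp, rfl⟩ := hf
  obtain ⟨Q, q, hQ, hΔ⟩ := exists_laplacian_logPolyFun_eq_logMul (by omega) hp
  refine ⟨logPolyFun Q 0 q, ?_, hΔ⟩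
  have hsplit : logPolyFun Q 0 q = logMul Q + fun x => MvPolynomial.eval x q := by
    funext x
    simp [logPolyFun, logMul]
  rw [hsplit, Lsp_eq_map_homogeneousSubmodule]
  exact Submodule.add_mem_sup (Submodule.mem_map_of_mem hQ) (Submodule.subset_span ⟨q, rfl⟩)

/-- `L_m ⊆ Δ(L_{m+2} ⊕ ℝ[x])` for even `n`. -/
theorem Lsp_subset_laplacian
    (n : ℕ) (hn : 2 ≤ n) (heven : Even n) (m : ℕ)
    (f : (Fin n → ℝ) → ℝ) (hf : f ∈ Lsp n m) :
    ∃ g ∈ Lsp n (m + 2) ⊔ PolySp n, ∀ x : Fin n → ℝ, x ≠ 0 → laplacian g x = f x :=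
  Lsp_subset_laplacian_general n hn m f hf

end
end

section
/- Let n ≥ 2, let Ω ⊂ ℝⁿ be a bounded smooth domain, let K be a positive definite smooth matrix-valued function on Ω, and let γ ∈ (0,1). Let H^l(x,y) be the remainder in the order-l expansion of the Green's function G_K (for l ∈ ℕ*). Then for the regular part H_K(x,y) = H⁰(x,y) one has, for every l ∈ ℕ*, H_K(x,y) = Σ_{i=n−1}^{n+l−2} Φ_i(T_y(x−y)) + H^l(x,y) for all x, y ∈ Ω; moreover Φ_i(0) = 0 for every i ≥ n−1, so that the Robin's function satisfies R_K(x) = H_K(x,x) = H^l(x,x) for every l ∈ ℕ* and x ∈ Ω. -/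
open MeasureTheory Finset Matrix

noncomputable section

/-!
Subtracting the order-`0` expansion of `G_K` from the order-`l` one gives
`H⁰(x,y) = Σ_{i=n-1}^{n+l-2} Φᵢ(T_y(x-y)) + Hˡ(x,y)` for `x ≠ y`. For `i ≥ n-1` every term of `Φᵢ`
has positive homogeneity degree (`x^α / r^d` with `|α| > d`, or `x^α log r` with `|α| ≥ 1`), so
`Φᵢ` is continuous at `0` with value `0`. As `H⁰` and `Hˡ` are continuous, the identity extends to
the diagonal, where the sum vanishes.
-/

open Filter Topology

theorem Finset.sum_Icc_add_sum_Icc {M : Type*} [AddCommMonoid M] (f : ℕ → M) {a b c : ℕ}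
    (hab : a ≤ b + 1) (hbc : b ≤ c) :
    ∑ i ∈ Icc a b, f i + ∑ i ∈ Icc (b + 1) c, f i = ∑ i ∈ Icc a c, f i := by
  simp only [← Finset.Ico_add_one_right_eq_Icc]
  exact Finset.sum_Ico_consecutive f hab (by omega)

/-- At `x₀ = 0` the functions of `Esp`, `EspS`, `Lsp` take the junk values `x / 0 = 0` and
`log 0 = 0`; membership in `vanishingAt 0` says that this value is also their limit. -/
def vanishingAt {X : Type*} [TopologicalSpace X] (x₀ : X) : Submodule ℝ (X → ℝ) where
  carrier := {f | ContinuousAt f x₀ ∧ f x₀ = 0}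
  zero_mem' := ⟨continuousAt_const, rfl⟩
  add_mem' := fun ⟨hf, hf₀⟩ ⟨hg, hg₀⟩ => ⟨hf.add hg, by simp [hf₀, hg₀]⟩
  smul_mem' := fun c _ ⟨hf, hf₀⟩ => ⟨hf.const_smul c, by simp [hf₀]⟩

theorem mem_vanishingAt_of_abs_le {X : Type*} [TopologicalSpace X] {x₀ : X} {f g : X → ℝ}
    (hg : g ∈ vanishingAt x₀) (hfg : ∀ᶠ x in 𝓝 x₀, |f x| ≤ g x) : f ∈ vanishingAt x₀ := by
  have hf₀ : f x₀ = 0 := abs_nonpos_iff.mp (hg.2 ▸ hfg.self_of_nhds)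
  refine ⟨?_, hf₀⟩
  have hg' : Tendsto g (𝓝 x₀) (𝓝 0) := hg.2 ▸ hg.1.tendsto
  rw [ContinuousAt, hf₀]
  exact squeeze_zero_norm' hfg hg'

section rnorm

variable {n : ℕ}

theorem continuous_rnorm : Continuous (rnorm (n := n)) := by
  unfold rnorm
  fun_prop

@[simp]
theorem rnorm_zero : rnorm (0 : Fin n → ℝ) = 0 := by simp [rnorm]

theorem rnorm_nonneg (x : Fin n → ℝ) : 0 ≤ rnorm x := Real.sqrt_nonneg _

theorem abs_le_rnorm (x : Fin n → ℝ) (i : Fin n) : |x i| ≤ rnorm x := by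
  rw [← Real.sqrt_sq_eq_abs]
  exact Real.sqrt_le_sqrt
    (Finset.single_le_sum (f := fun j => x j ^ 2) (fun j _ => sq_nonneg _) (Finset.mem_univ i))

theorem abs_prod_pow_le_rnorm_pow (x : Fin n → ℝ) (α : Fin n → ℕ) :
    |∏ i, x i ^ α i| ≤ rnorm x ^ ∑ i, α i := by
  rw [Finset.abs_prod, ← Finset.prod_pow_eq_pow_sum]
  gcongr with i
  rw [abs_pow]
  gcongr
  exact abs_le_rnorm x i

theorem rnorm_pow_mem_vanishingAt {k : ℕ} (hk : k ≠ 0) :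
    (fun x : Fin n → ℝ => rnorm x ^ k) ∈ vanishingAt 0 :=
  ⟨(continuous_rnorm.pow k).continuousAt, by simp [hk]⟩

theorem abs_rnorm_mul_log_mem_vanishingAt :
    (fun x : Fin n → ℝ => |rnorm x * Real.log (rnorm x)|) ∈ vanishingAt 0 :=
  ⟨(Real.continuous_mul_log.comp continuous_rnorm).abs.continuousAt, by simp⟩

theorem monomial_div_rnorm_pow_mem_vanishingAt {α : Fin n → ℕ} {d : ℕ} (hd : d < ∑ i, α i) :
    (fun x => (∏ i, x i ^ α i) / rnorm x ^ d) ∈ vanishingAt 0 := by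
  refine mem_vanishingAt_of_abs_le (rnorm_pow_mem_vanishingAt (k := ∑ i, α i - d) (by omega))
    (Eventually.of_forall fun x => ?_)
  have hr := rnorm_nonneg x
  rw [abs_div, abs_of_nonneg (pow_nonneg hr d)]
  refine div_le_of_le_mul₀ (pow_nonneg hr d) (pow_nonneg hr _) ?_
  rw [← pow_add, Nat.sub_add_cancel hd.le]
  exact abs_prod_pow_le_rnorm_pow x α

theorem monomial_mul_log_rnorm_mem_vanishingAt {α : Fin n → ℕ} (hα : 0 < ∑ i, α i) :
    (fun x => (∏ i, x i ^ α i) * Real.log (rnorm x)) ∈ vanishingAt 0 := by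
  refine mem_vanishingAt_of_abs_le abs_rnorm_mul_log_mem_vanishingAt ?_
  have hnear : ∀ᶠ x in 𝓝 (0 : Fin n → ℝ), rnorm x ≤ 1 :=
    (continuous_rnorm.tendsto' 0 0 rnorm_zero).eventually_le_const one_pos
  filter_upwards [hnear] with x hx
  have hr := rnorm_nonneg x
  rw [abs_mul, abs_mul, abs_of_nonneg hr]
  gcongr
  exact (abs_prod_pow_le_rnorm_pow x α).trans (pow_le_of_le_one hr hx hα.ne')

end rnorm

section spaces

variable {n m k : ℕ}

theorem Esp_le_vanishingAt (h : n < k) : Esp n m k ≤ vanishingAt 0 := by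
  rw [Esp, Submodule.span_le]
  rintro f ⟨α, hα, rfl⟩
  exact monomial_div_rnorm_pow_mem_vanishingAt (by omega)

theorem EspS_le_vanishingAt (h : n < k) : EspS n m k ≤ vanishingAt 0 := by
  rw [EspS, Submodule.span_le]
  rintro f ⟨α, hα, rfl, -⟩
  exact monomial_div_rnorm_pow_mem_vanishingAt (by omega)

theorem Lsp_le_vanishingAt (h : 0 < m) : Lsp n m ≤ vanishingAt 0 := by
  rw [Lsp, Submodule.span_le]
  rintro f ⟨α, hα, rfl⟩
  exact monomial_mul_log_rnorm_mem_vanishingAt (by omega)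

theorem Fsp_le_vanishingAt (h : n < k) : Fsp n m k ≤ vanishingAt 0 := by
  rw [Fsp, if_neg (by omega)]
  exact sup_le (EspS_le_vanishingAt h) (Lsp_le_vanishingAt (by omega))

theorem ite_Esp_Fsp_le_vanishingAt (p : Prop) [Decidable p] (h : n < k) :
    (if p then Esp n m k else Fsp n m k) ≤ vanishingAt 0 := by
  split_ifs
  exacts [Esp_le_vanishingAt h, Fsp_le_vanishingAt h]

end spaces

theorem ContinuousOn.continuousAt_left {X Y Z : Type*} [TopologicalSpace X]
    [TopologicalSpace Y] [TopologicalSpace Z] {F : X → Y → Z} {s : Set X} {t : Set Y}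
    (hF : ContinuousOn (fun p : X × Y => F p.1 p.2) (s ×ˢ t)) (hs : IsOpen s) (ht : IsOpen t)
    {x : X} {y : Y} (hx : x ∈ s) (hy : y ∈ t) : ContinuousAt (fun x => F x y) x :=
  (hF.continuousAt ((hs.prod ht).mem_nhds ⟨hx, hy⟩)).comp_of_eq
    (f := fun x => (x, y)) (by fun_prop) rfl

theorem eq_add_of_eq_add_on_diff_singleton {X : Type*} [TopologicalSpace X] {U : Set X}
    {x₀ : X} [(𝓝[≠] x₀).NeBot] {f g s : X → ℝ} (hU : IsOpen U) (hx₀ : x₀ ∈ U)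
    (hf : ContinuousAt f x₀) (hg : ContinuousAt g x₀) (hs : ContinuousAt s x₀)
    (h : ∀ x ∈ U, x ≠ x₀ → f x = s x + g x) : f x₀ = s x₀ + g x₀ := by
  have hpunct : ∀ᶠ x in 𝓝[≠] x₀, f x = s x + g x := by
    filter_upwards [self_mem_nhdsWithin, nhdsWithin_le_nhds (hU.mem_nhds hx₀)] with x hx hxU
    exact h x hxU hx
  exact ((hf.eventuallyEq_nhds_iff_eventuallyEq_nhdsNE (hs.add hg)).mp hpunct).self_of_nhds

theorem comp_mulVec_sub_mem_vanishingAt {m n : ℕ} (T : Matrix (Fin m) (Fin n) ℝ)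
    (y : Fin n → ℝ) {f : (Fin m → ℝ) → ℝ} (hf : f ∈ vanishingAt 0) :
    (fun x => f (T *ᵥ (x - y))) ∈ vanishingAt y :=
  ⟨hf.1.comp_of_eq (f := fun x => T *ᵥ (x - y)) (by fun_prop) (by simp), by simpa using hf.2⟩

theorem regular_part_expansion_and_robin_general
    (n : ℕ) (hn : 2 ≤ n)
    (Ω : Set (Fin n → ℝ)) (hΩ : IsSmoothDomain Ω)
    (Kf : (Fin n → ℝ) → Matrix (Fin n) (Fin n) ℝ)
    (Tm : (Fin n → ℝ) → Matrix (Fin n) (Fin n) ℝ)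
    (G : (Fin n → ℝ) → (Fin n → ℝ) → ℝ)
    (Φ : ℕ → (Fin n → ℝ) → (Fin n → ℝ) → ℝ)
    (H : ℕ → (Fin n → ℝ) → (Fin n → ℝ) → ℝ)
    (hΦmem : ∀ i, 1 ≤ i → ∀ y ∈ Ω,
      Φ i y ∈ (if Odd n then Esp n (2 * i - 1) (i + 2) else Fsp n (2 * i - 1) (i + 2)))
    (hHreg : ∀ l : ℕ,
      ContinuousOn (fun p : (Fin n → ℝ) × (Fin n → ℝ) => H l p.1 p.2) (Ω ×ˢ Ω))
    (hexp : ∀ l : ℕ, ∀ y ∈ Ω, ∀ x ∈ closure Ω, x ≠ y →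
      G x y = (Real.sqrt (Kf y).det)⁻¹ * Phi0 n ((Tm y).mulVec (x - y))
        + ∑ i ∈ Finset.Icc 1 (n + l - 2), Φ i y ((Tm y).mulVec (x - y)) + H l x y) :
    (∀ l : ℕ, 1 ≤ l → ∀ y ∈ Ω, ∀ x ∈ Ω,
      H 0 x y = ∑ i ∈ Finset.Icc (n - 1) (n + l - 2), Φ i y ((Tm y).mulVec (x - y))
        + H l x y) ∧
    (∀ i, n - 1 ≤ i → ∀ y ∈ Ω, Φ i y 0 = 0) ∧
    (∀ l : ℕ, 1 ≤ l → ∀ x ∈ Ω, H 0 x x = H l x x) := by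
  have hΦvanish : ∀ i, n - 1 ≤ i → ∀ y ∈ Ω, Φ i y ∈ vanishingAt 0 := fun i hi y hy =>
    ite_Esp_Fsp_le_vanishingAt _ (by omega) (hΦmem i (by omega) y hy)
  have hSvanish : ∀ l, ∀ y ∈ Ω,
      (fun x => ∑ i ∈ Icc (n - 1) (n + l - 2), Φ i y (Tm y *ᵥ (x - y))) ∈ vanishingAt y :=
    fun l y hy => by
      simpa only [Finset.sum_apply] using comp_mulVec_sub_mem_vanishingAt (Tm y) y
        (Submodule.sum_mem _ fun i hi => hΦvanish i (mem_Icc.mp hi).1 y hy)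
  have hoffdiag : ∀ l, ∀ y ∈ Ω, ∀ x ∈ Ω, x ≠ y →
      H 0 x y = ∑ i ∈ Icc (n - 1) (n + l - 2), Φ i y (Tm y *ᵥ (x - y)) + H l x y := by
    intro l y hy x hx hxy
    have h₀ := hexp 0 y hy x (subset_closure hx) hxy
    have hl := hexp l y hy x (subset_closure hx) hxy
    rw [← Finset.sum_Icc_add_sum_Icc _ (b := n - 2) (by omega) (by omega),
      show n - 2 + 1 = n - 1 by omega] at hl
    rw [show n + 0 - 2 = n - 2 by omega] at h₀
    linarith
  have hdiag : ∀ l, ∀ y ∈ Ω,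
      H 0 y y = ∑ i ∈ Icc (n - 1) (n + l - 2), Φ i y (Tm y *ᵥ (y - y)) + H l y y := by
    intro l y hy
    -- makes `Fin n → ℝ` nontrivial, so that `y` is not an isolated point
    have : Nonempty (Fin n) := ⟨⟨0, by omega⟩⟩
    exact eq_add_of_eq_add_on_diff_singleton hΩ.1 hy
      ((hHreg 0).continuousAt_left hΩ.1 hΩ.1 hy hy) ((hHreg l).continuousAt_left hΩ.1 hΩ.1 hy hy)
      (hSvanish l y hy).1 fun x hx hxy => hoffdiag l y hy x hx hxy
  refine ⟨fun l _ y hy x hx => ?_, fun i hi y hy => (hΦvanish i hi y hy).2,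
    fun l _ x hx => by linarith [hdiag l x hx, (hSvanish l x hx).2]⟩
  rcases eq_or_ne x y with rfl | hxy
  exacts [hdiag l x hx, hoffdiag l y hy x hx hxy]

/-- The regular part `H_K = H⁰` satisfies `H_K(x,y) = Σ_{i=n-1}^{n+l-2} Φᵢ(T_y(x-y)) + Hˡ(x,y)`,
each `Φᵢ` with `i ≥ n-1` vanishes at `0`, and hence `R_K(x) = H⁰(x,x) = Hˡ(x,x)`. -/
theorem regular_part_expansion_and_robin
    (n : ℕ) (hn : 2 ≤ n)
    (Ω : Set (Fin n → ℝ)) (hΩ : IsSmoothDomain Ω)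
    (Kf : (Fin n → ℝ) → Matrix (Fin n) (Fin n) ℝ)
    (hKsmooth : ∀ i j, ContDiffOn ℝ (⊤ : ℕ∞) (fun x => Kf x i j) (closure Ω))
    (hKpos : ∀ x ∈ Ω, (Kf x).PosDef)
    (hKell : ∃ Λ₁ Λ₂ : ℝ, 0 < Λ₁ ∧ 0 < Λ₂ ∧ ∀ x ∈ Ω, ∀ ζ : Fin n → ℝ,
      Λ₁ * ∑ i, ζ i ^ 2 ≤ ∑ i, ∑ j, Kf x i j * ζ i * ζ j ∧
      ∑ i, ∑ j, Kf x i j * ζ i * ζ j ≤ Λ₂ * ∑ i, ζ i ^ 2)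
    (Tm : (Fin n → ℝ) → Matrix (Fin n) (Fin n) ℝ)
    (hTm : ∀ x ∈ Ω, (Tm x).PosDef ∧ (Tm x)⁻¹ * ((Tm x)⁻¹)ᵀ = Kf x)
    (G : (Fin n → ℝ) → (Fin n → ℝ) → ℝ) (hG : IsGreen Ω Kf G)
    (γ : ℝ) (hγ0 : 0 < γ) (hγ1 : γ < 1)
    (Φ : ℕ → (Fin n → ℝ) → (Fin n → ℝ) → ℝ)
    (H : ℕ → (Fin n → ℝ) → (Fin n → ℝ) → ℝ)
    (hΦmem : ∀ i, 1 ≤ i → ∀ y ∈ Ω,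
      Φ i y ∈ (if Odd n then Esp n (2 * i - 1) (i + 2) else Fsp n (2 * i - 1) (i + 2)))
    (hHreg : ∀ l : ℕ,
      ContinuousOn (fun p : (Fin n → ℝ) × (Fin n → ℝ) => H l p.1 p.2) (Ω ×ˢ Ω))
    (hexp : ∀ l : ℕ, ∀ y ∈ Ω, ∀ x ∈ closure Ω, x ≠ y →
      G x y = (Real.sqrt (Kf y).det)⁻¹ * Phi0 n ((Tm y).mulVec (x - y))
        + ∑ i ∈ Finset.Icc 1 (n + l - 2), Φ i y ((Tm y).mulVec (x - y)) + H l x y) :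
    (∀ l : ℕ, 1 ≤ l → ∀ y ∈ Ω, ∀ x ∈ Ω,
      H 0 x y = ∑ i ∈ Finset.Icc (n - 1) (n + l - 2), Φ i y ((Tm y).mulVec (x - y))
        + H l x y) ∧
    (∀ i, n - 1 ≤ i → ∀ y ∈ Ω, Φ i y 0 = 0) ∧
    (∀ l : ℕ, 1 ≤ l → ∀ x ∈ Ω, H 0 x x = H l x x) :=
  regular_part_expansion_and_robin_general n hn Ω hΩ Kf Tm G Φ H hΦmem hHreg hexp

end
end
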